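/- arXiv:1505.03766 — 3 statements merged into one kernel-verified Lean document; each statement's English description precedes it below -/
import Mathlib

section
/- Let (Ω,𝒜,ℙ) be a probability space, ℱ ⊆ 𝒢 two sub-σ-algebras, A a measurable event, and φ, n real random variables with n ℱ-measurable and φ 𝒢-measurable, such that ℙ[A | 𝒢] = (1 + φ·n)·ℙ[A | ℱ] almost surely. Then 1_A · 1_{1 + φ·n ≤ 0} = 0 almost surely; in particular 1 + φ·n > 0 almost surely on A. -/
open MeasureTheory
open scoped BigOperators

theorem stmt2 {Ω : Type*} (F G : MeasurableSpace Ω) [m : MeasurableSpace Ω] (μ : Measure Ω) [IsProbabilityMeasure μ]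
    (hFG : F ≤ G) (hG : G ≤ m)
    (A : Set Ω) (hA : MeasurableSet A)
    (φ n : Ω → ℝ) (hn : Measurable[F] n) (hφ : Measurable[G] φ)
    (h : μ[A.indicator (fun _ => (1 : ℝ))|G]
        =ᵐ[μ] fun ω => (1 + φ ω * n ω) * (μ[A.indicator (fun _ => (1 : ℝ))|F]) ω) :
    (∀ᵐ ω ∂μ, A.indicator (fun _ => (1 : ℝ)) ω *
        (if 1 + φ ω * n ω ≤ 0 then (1 : ℝ) else 0) = 0) ∧
    ∀ᵐ ω ∂μ, ω ∈ A → 0 < 1 + φ ω * n ω := by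
  letI : MeasurableSpace Ω := m
  set f := A.indicator (fun _ => (1 : ℝ)) with hf
  have hFm : F ≤ m := hFG.trans hG
  have hAm : MeasurableSet[m] A := hA
  have hfint : Integrable f μ := Integrable.indicator (μ := μ) (integrable_const (1 : ℝ)) hAm
  have hf0 : 0 ≤ᵐ[μ] f := Filter.Eventually.of_forall fun ω =>
    Set.indicator_nonneg (fun _ _ => zero_le_one) ω
  have hG0 : 0 ≤ᵐ[μ] μ[f|G] := condExp_nonneg hf0
  have hF0 : 0 ≤ᵐ[μ] μ[f|F] := condExp_nonneg hf0
  set B : Set Ω := {ω | 1 + φ ω * n ω ≤ 0} with hB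
  have hnG : Measurable[G] n := hn.mono hFG le_rfl
  have hBmeas : MeasurableSet[G] B := by
    have : Measurable[G] (fun ω => 1 + φ ω * n ω) :=
      (measurable_const.add (hφ.mul hnG))
    exact this measurableSet_Iic
  -- μ[f|G] = 0 a.e. on B
  have hzero : ∀ᵐ ω ∂μ, ω ∈ B → (μ[f|G]) ω = 0 := by
    filter_upwards [h, hG0, hF0] with ω h1 h2 h3 hωB
    have hle : (1 + φ ω * n ω) * (μ[f|F]) ω ≤ 0 :=
      mul_nonpos_of_nonpos_of_nonneg hωB h3
    exact le_antisymm (h1 ▸ hle) h2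
  have hInt : ∫ ω in B, f ω ∂μ = 0 := by
    have h1 : ∫ ω in B, f ω ∂μ = ∫ ω in B, (μ[f|G]) ω ∂μ :=
      (setIntegral_condExp hG hfint hBmeas).symm
    rw [h1]
    refine setIntegral_eq_zero_of_ae_eq_zero ?_
    filter_upwards [hzero] with ω hω hωB using hω hωB
  have hBmeas' : MeasurableSet[m] B := hG _ hBmeas
  have hμAB : μ (A ∩ B) = 0 := by
    have : ∫ ω in B, f ω ∂μ = (μ (B ∩ A)).toReal := by
      rw [hf, setIntegral_indicator (μ := μ) hAm, setIntegral_const, smul_eq_mul, mul_one, measureReal_def]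
    rw [this] at hInt
    have := (ENNReal.toReal_eq_zero_iff _).mp hInt
    rcases this with h0 | htop
    · rwa [Set.inter_comm]
    · exact absurd htop (measure_ne_top μ _)
  have hae : ∀ᵐ ω ∂μ, ω ∉ A ∩ B := by
    rw [ae_iff]; simpa using hμAB
  constructor
  · filter_upwards [hae] with ω hω
    by_cases hωA : ω ∈ A
    · have hωB : ω ∉ B := fun hb => hω ⟨hωA, hb⟩
      simp only [hB, Set.mem_setOf_eq] at hωB
      rw [if_neg hωB, mul_zero]
    · simp [hf, Set.indicator_of_notMem hωA]
  · filter_upwards [hae] with ω hω hωA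
    have hωB : ω ∉ B := fun hb => hω ⟨hωA, hb⟩
    simpa [hB, not_le] using hωB
end

section
/- Let (Ω,𝒜,ℙ) be a probability space, ℱ ⊆ 𝒢 sub-σ-algebras, and (A_h)_{0≤h≤d} a measurable partition of Ω. Set p_h = ℙ[A_h|ℱ], q_h = ℙ[A_h|𝒢]. Suppose that for every h, almost surely {p_h > 0} = {q_h > 0} (as events, up to null sets). Let W ∈ ℝ^{d+1} be the random vector with components W_h = 1_{A_h} - p_h and W̃ the vector with components W̃_h = 1_{A_h} - q_h. Then for every vector a ∈ ℝ^{d+1} that is ℱ-measurable and satisfies ᵀa·(1_{A_h} - p_h)=0 a.s. for all h (i.e. a is constant on the random index set {h : p_h > 0}), one also has ᵀa·W̃ = 0 almost surely. -/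
open MeasureTheory Finset
open scoped BigOperators

theorem stmt3 {Ω : Type*} (F G : MeasurableSpace Ω) [m : MeasurableSpace Ω] (μ : Measure Ω) [IsProbabilityMeasure μ]
    (hFG : F ≤ G) (hG : G ≤ m) (d : ℕ)
    (A : Fin (d + 1) → Set Ω) (hAmeas : ∀ h, MeasurableSet (A h))
    (hAdisj : Pairwise (Function.onFun Disjoint A))
    (hAcover : (⋃ h, A h) = Set.univ)
    (p q : Fin (d + 1) → Ω → ℝ)
    (hp : ∀ h, p h =ᵐ[μ] μ[(A h).indicator (fun _ => (1 : ℝ))|F])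
    (hq : ∀ h, q h =ᵐ[μ] μ[(A h).indicator (fun _ => (1 : ℝ))|G])
    (hsupp : ∀ h, ∀ᵐ ω ∂μ, (0 < p h ω ↔ 0 < q h ω))
    (a : Ω → Fin (d + 1) → ℝ) (ha : Measurable[F] a)
    (hker : ∀ᵐ ω ∂μ,
      ∑ h : Fin (d + 1), a ω h * ((A h).indicator (fun _ => (1 : ℝ)) ω - p h ω) = 0) :
    ∀ᵐ ω ∂μ,
      ∑ h : Fin (d + 1), a ω h * ((A h).indicator (fun _ => (1 : ℝ)) ω - q h ω) = 0 := by
  classical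
  have hFm : F ≤ m := hFG.trans hG
  set p' : Fin (d + 1) → Ω → ℝ :=
    fun h => μ[(A h).indicator (fun _ => (1 : ℝ))|F] with hp'def
  set q' : Fin (d + 1) → Ω → ℝ :=
    fun h => μ[(A h).indicator (fun _ => (1 : ℝ))|G] with hq'def
  have hint : ∀ h, Integrable ((A h).indicator (fun _ => (1 : ℝ))) μ :=
    fun h => (integrable_const (μ := μ) (1 : ℝ)).indicator (hAmeas h)
  set c : Ω → ℝ := fun ω => ∑ h, a ω h * p' h ω with hcdef
  -- pointwise partition facts
  have hmem : ∀ ω, ∃ h, ω ∈ A h := by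
    intro ω
    have : ω ∈ ⋃ h, A h := hAcover ▸ Set.mem_univ ω
    simpa using this
  have hsum_ind : ∀ (f : Fin (d + 1) → ℝ) (h : Fin (d + 1)) (ω : Ω), ω ∈ A h →
      ∑ j, f j * (A j).indicator (fun _ => (1 : ℝ)) ω = f h := by
    intro f h ω hω
    rw [Finset.sum_eq_single h]
    · simp [Set.indicator_of_mem hω]
    · intro j _ hj
      have hωj : ω ∉ A j := fun hc => (hAdisj hj).le_bot ⟨hc, hω⟩
      simp [Set.indicator_of_notMem hωj]
    · simp
  -- a.e. the kernel condition with p', so a ω h = c ω on A h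
  have hc : ∀ᵐ ω ∂μ, ∀ h, ω ∈ A h → a ω h = c ω := by
    have hpp : ∀ᵐ ω ∂μ, ∀ h, p h ω = p' h ω :=
      (ae_all_iff.2 fun h => hp h)
    filter_upwards [hker, hpp] with ω hk hpω h hω
    have h1 : ∑ j, a ω j * ((A j).indicator (fun _ => (1 : ℝ)) ω - p' j ω) = 0 := by
      rw [← hk]
      exact Finset.sum_congr rfl fun j _ => by rw [hpω j]
    have h2 : ∑ j, a ω j * (A j).indicator (fun _ => (1 : ℝ)) ω = c ω := by
      have h3 : ∑ j, (a ω j * (A j).indicator (fun _ => (1 : ℝ)) ω - a ω j * p' j ω) = 0 := by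
        rw [← h1]; exact Finset.sum_congr rfl fun j _ => by ring
      rw [Finset.sum_sub_distrib] at h3
      linarith
    rw [← h2, hsum_ind (a ω) h ω hω]
  -- the "bad" sets
  set B : Fin (d + 1) → Set Ω := fun h => {ω | a ω h ≠ c ω} with hBdef
  have hBmeasF : ∀ h, MeasurableSet[F] (B h) := by
    intro h
    have h1 : Measurable[F] fun ω => a ω h := (measurable_pi_apply h).comp ha
    have h2 : Measurable[F] c := by
      apply Finset.measurable_sum
      intro j _
      exact ((measurable_pi_apply j).comp ha).mul
        (stronglyMeasurable_condExp.measurable)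
    exact (h1.sub h2) (measurableSet_singleton 0).compl |>.congr (by
      ext ω; simp [hBdef, sub_eq_zero])
  have hBmeas : ∀ h, MeasurableSet[m] (B h) := fun h => hFm _ (hBmeasF h)
  have hAB : ∀ h, μ (A h ∩ B h) = 0 := by
    intro h
    rw [← le_zero_iff]
    calc μ (A h ∩ B h) ≤ μ {ω | ¬ ∀ h, ω ∈ A h → a ω h = c ω} := by
          apply measure_mono
          intro ω ⟨hω1, hω2⟩
          simp only [Set.mem_setOf_eq]
          push_neg
          exact ⟨h, hω1, hω2⟩
      _ = 0 := hc
  -- p' vanishes a.e. on B h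
  have hpzero : ∀ h, ∀ᵐ ω ∂μ, ω ∈ B h → p' h ω = 0 := by
    intro h
    have hnn : 0 ≤ᵐ[μ] p' h :=
      condExp_nonneg (Filter.Eventually.of_forall fun ω => Set.indicator_nonneg (by simp) ω)
    have hIzero : ∫ ω in B h, p' h ω ∂μ = 0 := by
      rw [hp'def, setIntegral_condExp hFm (hint h) (hBmeasF h)]
      rw [setIntegral_indicator (μ := μ) (s := B h) (hAmeas h)]
      rw [setIntegral_const (μ := μ) (s := B h ∩ A h) (1 : ℝ), measureReal_def]
      rw [Set.inter_comm, hAB h]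
      simp
    have hInt : Integrable (p' h) (μ.restrict (B h)) :=
      (integrable_condExp (m := F) (μ := μ) (f := (A h).indicator (fun _ => (1 : ℝ)))).restrict
    have hnnr : 0 ≤ᵐ[μ.restrict (B h)] p' h := ae_restrict_of_ae hnn
    have := (integral_eq_zero_iff_of_nonneg_ae hnnr hInt).1 hIzero
    have := (ae_restrict_iff' (μ := μ) (hBmeas h)).1 this
    filter_upwards [this] with ω hω hωB
    simpa using hω hωB
  -- hence q' vanishes a.e. on B h
  have hqzero : ∀ h, ∀ᵐ ω ∂μ, ω ∈ B h → q' h ω = 0 := by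
    intro h
    have hnn : 0 ≤ᵐ[μ] q' h :=
      condExp_nonneg (Filter.Eventually.of_forall fun ω => Set.indicator_nonneg (by simp) ω)
    filter_upwards [hpzero h, hsupp h, hp h, hq h, hnn] with ω h1 h2 h3 h4 h5 hωB
    have hpω : p h ω = 0 := by rw [h3]; exact h1 hωB
    have : ¬ 0 < q h ω := fun hlt => by
      have := h2.2 hlt; rw [hpω] at this; exact lt_irrefl 0 this
    have : q h ω ≤ 0 := not_lt.1 this
    rw [h4] at this
    exact le_antisymm (by simpa using this) h5
  -- sum of q' is 1 a.e.
  have hqsum : ∀ᵐ ω ∂μ, ∑ h, q' h ω = 1 := by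
    have hsum1 : (∑ h, (A h).indicator (fun _ => (1 : ℝ))) = fun _ => (1 : ℝ) := by
      funext ω
      obtain ⟨h, hω⟩ := hmem ω
      have := hsum_ind (fun _ => (1 : ℝ)) h ω hω
      simpa [Finset.sum_apply] using this
    have h1 := condExp_finsetSum (s := Finset.univ)
      (f := fun h => (A h).indicator (fun _ => (1 : ℝ))) (fun h _ => hint h) (m := G) (μ := μ)
    rw [hsum1] at h1
    rw [condExp_const (μ := μ) hG (1 : ℝ)] at h1
    filter_upwards [h1] with ω hω
    have : (∑ h, μ[(A h).indicator (fun _ => (1 : ℝ))|G]) ω = 1 := hω.symm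
    simpa [Finset.sum_apply] using this
  -- conclude
  have hqq : ∀ᵐ ω ∂μ, ∀ h, q h ω = q' h ω := ae_all_iff.2 fun h => hq h
  have hqz : ∀ᵐ ω ∂μ, ∀ h, ω ∈ B h → q' h ω = 0 := ae_all_iff.2 hqzero
  filter_upwards [hc, hqq, hqz, hqsum] with ω hcω hqqω hqzω hqsω
  obtain ⟨h0, hω0⟩ := hmem ω
  have e1 : ∑ h, a ω h * (A h).indicator (fun _ => (1 : ℝ)) ω = c ω := by
    rw [hsum_ind (a ω) h0 ω hω0]; exact hcω h0 hω0
  have e2 : ∑ h, a ω h * q h ω = c ω := by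
    have : ∀ h, a ω h * q h ω = c ω * q' h ω := by
      intro h
      rw [hqqω h]
      by_cases hB : a ω h = c ω
      · rw [hB]
      · rw [hqzω h hB]; ring
    rw [Finset.sum_congr rfl fun h _ => this h, ← Finset.mul_sum, hqsω, mul_one]
  calc ∑ h, a ω h * ((A h).indicator (fun _ => (1 : ℝ)) ω - q h ω)
      = ∑ h, a ω h * (A h).indicator (fun _ => (1 : ℝ)) ω - ∑ h, a ω h * q h ω := by
        rw [← Finset.sum_sub_distrib]; exact Finset.sum_congr rfl fun h _ => by ring
    _ = 0 := by rw [e1, e2, sub_self]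
end

section
/- Let (Ω,𝒜,ℙ) be a probability space, ℱ ⊆ 𝒢 sub-σ-algebras, B a measurable event, and ℝ^k-valued random variables φ (𝒢-measurable) and l, R (ℱ-measurable on the relevant sets) such that ℙ[B|𝒢]·(1+ᵀφR) = (1+ᵀφl)·ℙ[B|ℱ] almost surely, with 1+ᵀφR > 0 a.s. If furthermore 1_{1+ᵀφl ≤ 0}·ℙ[B|𝒢] ≥ 0 trivially and the identity holds, then 1_B·1_{1+ᵀφl ≤ 0} = 0 almost surely; i.e. 1+ᵀφl > 0 a.s. on B. -/
open MeasureTheory Finset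
open scoped BigOperators

theorem stmt10 {Ω : Type*} (F G : MeasurableSpace Ω) [m : MeasurableSpace Ω] (μ : Measure Ω) [IsProbabilityMeasure μ]
    (hFG : F ≤ G) (hG : G ≤ m)
    (B : Set Ω) (hB : MeasurableSet B) (k : ℕ)
    (φ l R : Ω → Fin k → ℝ)
    (hφ : Measurable[G] φ) (hl : Measurable[F] l) (hR : Measurable[F] R)
    (hrel : ∀ᵐ ω ∂μ,
      (μ[B.indicator (fun _ => (1 : ℝ))|G]) ω * (1 + ∑ i, φ ω i * R ω i)
        = (1 + ∑ i, φ ω i * l ω i) * (μ[B.indicator (fun _ => (1 : ℝ))|F]) ω)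
    (hpos : ∀ᵐ ω ∂μ, 0 < 1 + ∑ i, φ ω i * R ω i) :
    (∀ᵐ ω ∂μ, B.indicator (fun _ => (1 : ℝ)) ω *
        (if 1 + ∑ i, φ ω i * l ω i ≤ 0 then (1 : ℝ) else 0) = 0) ∧
    ∀ᵐ ω ∂μ, ω ∈ B → 0 < 1 + ∑ i, φ ω i * l ω i := by
  letI : MeasurableSpace Ω := m
  have hBnn : 0 ≤ᵐ[μ] B.indicator (fun _ => (1 : ℝ)) :=
    Filter.Eventually.of_forall fun ω => Set.indicator_nonneg (fun _ _ => zero_le_one) ω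
  have hBi : Integrable (B.indicator (fun _ => (1 : ℝ))) μ :=
    (integrable_const 1).indicator hB
  have hfnn : 0 ≤ᵐ[μ] μ[B.indicator (fun _ => (1 : ℝ))|G] := condExp_nonneg hBnn
  have hgnn : 0 ≤ᵐ[μ] μ[B.indicator (fun _ => (1 : ℝ))|F] := condExp_nonneg hBnn
  -- the set A
  set A : Set Ω := {ω | 1 + ∑ i, φ ω i * l ω i ≤ 0} with hAdef
  have hel : Measurable[G] fun ω => 1 + ∑ i, φ ω i * l ω i := by
    apply Measurable.const_add
    exact Finset.measurable_sum _ fun i _ =>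
      ((measurable_pi_apply i).comp hφ).mul
        ((measurable_pi_apply i).comp (hl.mono hFG le_rfl))
  have hA : MeasurableSet[G] A := measurableSet_le hel measurable_const
  have hAm : MeasurableSet[m] A := hG _ hA
  -- f = 0 a.e. on A
  have hf0 : ∀ᵐ ω ∂μ, ω ∈ A → (μ[B.indicator (fun _ => (1 : ℝ))|G]) ω = 0 := by
    filter_upwards [hrel, hpos, hfnn, hgnn] with ω h1 h2 h3 h4 hωA
    simp only [Pi.zero_apply] at h3 h4
    have hle : 1 + ∑ i, φ ω i * l ω i ≤ 0 := hωA
    have : (μ[B.indicator (fun _ => (1 : ℝ))|G]) ω * (1 + ∑ i, φ ω i * R ω i) ≤ 0 := by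
      rw [h1]; exact mul_nonpos_of_nonpos_of_nonneg hle h4
    nlinarith
  -- the function h
  set h : Ω → ℝ := fun ω => B.indicator (fun _ => (1 : ℝ)) ω *
      (if 1 + ∑ i, φ ω i * l ω i ≤ 0 then (1 : ℝ) else 0) with hhdef
  have hh_eq : h = A.indicator (B.indicator (fun _ => (1 : ℝ))) := by
    funext ω
    by_cases hω : ω ∈ A
    · simp [hhdef, Set.indicator_of_mem hω, hω, hAdef.symm ▸ hω]
      simp only [hAdef, Set.mem_setOf_eq] at hω
      simp [hω]
    · simp only [hAdef, Set.mem_setOf_eq] at hω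
      simp [hhdef, Set.indicator_of_notMem, hAdef, Set.mem_setOf_eq, hω]
  have hh_nonneg : ∀ ω, 0 ≤ h ω := fun ω => by
    apply mul_nonneg (Set.indicator_nonneg (fun _ _ => zero_le_one) ω)
    split <;> norm_num
  have hh_int : Integrable h μ := by
    rw [hh_eq]; exact hBi.indicator hAm
  have hint : ∫ ω, h ω ∂μ = 0 := by
    rw [hh_eq]
    rw [integral_indicator hAm]
    rw [← setIntegral_condExp hG hBi hA]
    rw [setIntegral_eq_zero_iff_of_nonneg_ae]
    · exact (ae_restrict_iff' hAm).2 hf0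
    · exact ae_restrict_of_ae hfnn
    · exact integrable_condExp.integrableOn
  have hzero : ∀ᵐ ω ∂μ, h ω = 0 := by
    have := (integral_eq_zero_iff_of_nonneg hh_nonneg hh_int).1 hint
    filter_upwards [this] with ω hω using hω
  refine ⟨hzero, ?_⟩
  filter_upwards [hzero] with ω hω hωB
  by_contra hc
  push_neg at hc
  simp [hhdef, Set.indicator_of_mem hωB, hc] at hω
end
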